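/- Let R ≥ 0 and define, for real numbers a ≥ b ≥ 0, H(a,b) := ∑_{ℓ=0}^∞ 2^{−ℓ} R^{ℓ+1} (a²−b²)^ℓ/(ℓ!·(ℓ+1)!), so that H(a,b) = √(2R/(a²−b²)) · I₁(√(a²−b²)·√(2R)) whenever a > b. Then for all L₁ ≥ L₂ > 0 one has ∫₀^R I₀(L₁√(2r)) · I₀(L₂√(2r)) dr = H(L₁,L₂) + ∫₀^{L₂} H(L₁,K) · H(L₂,K) · K dK. -/

import Mathlib

open Real MeasureTheory

/-- Modified Bessel function of the first kind of integer order `ν`. -/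
noncomputable def besselI (ν : ℕ) (x : ℝ) : ℝ :=
  ∑' k : ℕ, (x / 2) ^ (2 * k + ν) / ((Nat.factorial k : ℝ) * (Nat.factorial (k + ν) : ℝ))

/-- The half-tight cylinder generating function
`H(a,b) = ∑_{ℓ≥0} 2^{-ℓ} R^{ℓ+1} (a²-b²)^ℓ / (ℓ!(ℓ+1)!)`. -/
noncomputable def Hfun (R a b : ℝ) : ℝ :=
  ∑' ℓ : ℕ, R ^ (ℓ + 1) * (a ^ 2 - b ^ 2) ^ ℓ /
    (2 ^ ℓ * (Nat.factorial ℓ : ℝ) * (Nat.factorial (ℓ + 1) : ℝ))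

/-!
Put `c = (L₁² - L₂²)/2` and `b = L₂²/2`. Both `I₀(L√(2r)) = ∑ₖ (rL²/2)ᵏ/(k!)²` and `Hfun` are
power series with nonnegative terms, so they can be multiplied as Cauchy products and integrated
termwise; the substitution `s = (L₂² - K²)/2` turns the `K`-integral into an integral over
`s ∈ [0, b]`. Comparing coefficients of `R^(n+2)`, the theorem reduces to the polynomial identity
`P (n+1) (c+b) b = (n+2) * (ψ (n+1) c + ∫₀^b G n (c+s) s ds)`, where `P`, `ψ` and `G` stand for
`besselZeroProdCoeff`, `besselOneTerm` and `besselOneProdCoeff`.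
Both sides agree at `b = 0`, and they have the same `b`-derivative: `u^(k+1)/((k+1)!)²` has
derivative `uᵏ/(k!(k+1)!)`, and `1/(k!)² = (k+1)/(k!(k+1)!)`, so for each `ℓ + m = n` the two halves
of the product rule contribute `(ℓ+1) + (m+1) = n+2` copies of the same product.
-/

open Finset

-- `besselZeroTerm k ((x/2)^2)` and `(x/2) * besselOneTerm k ((x/2)^2)` are the `k`-th terms of
-- `I₀ x` and `I₁ x`.
noncomputable def besselZeroTerm (k : ℕ) (u : ℝ) : ℝ :=
  u ^ k / ((k.factorial : ℝ) * k.factorial)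

noncomputable def besselOneTerm (k : ℕ) (u : ℝ) : ℝ :=
  u ^ k / ((k.factorial : ℝ) * (k + 1).factorial)

noncomputable def besselZeroProdCoeff (n : ℕ) (a b : ℝ) : ℝ :=
  ∑ p ∈ antidiagonal n, besselZeroTerm p.1 a * besselZeroTerm p.2 b

noncomputable def besselOneProdCoeff (n : ℕ) (a b : ℝ) : ℝ :=
  ∑ p ∈ antidiagonal n, besselOneTerm p.1 a * besselOneTerm p.2 b

lemma besselZeroTerm_zero (u : ℝ) : besselZeroTerm 0 u = 1 := by
  simp [besselZeroTerm]

lemma besselOneTerm_zero (u : ℝ) : besselOneTerm 0 u = 1 := by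
  simp [besselOneTerm]

lemma besselZeroProdCoeff_zero (a b : ℝ) : besselZeroProdCoeff 0 a b = 1 := by
  simp [besselZeroProdCoeff, besselZeroTerm_zero]

lemma besselZeroTerm_eq_mul_besselOneTerm (k : ℕ) (u : ℝ) :
    besselZeroTerm k u = (k + 1) * besselOneTerm k u := by
  rw [besselZeroTerm, besselOneTerm, Nat.factorial_succ]
  push_cast
  field_simp

lemma besselZeroTerm_mul (k : ℕ) (r u : ℝ) :
    besselZeroTerm k (r * u) = r ^ k * besselZeroTerm k u := by
  rw [besselZeroTerm, besselZeroTerm, mul_pow, mul_div_assoc]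

lemma besselOneTerm_mul (k : ℕ) (r u : ℝ) :
    besselOneTerm k (r * u) = r ^ k * besselOneTerm k u := by
  rw [besselOneTerm, besselOneTerm, mul_pow, mul_div_assoc]

lemma besselZeroTerm_nonneg (k : ℕ) {u : ℝ} (hu : 0 ≤ u) : 0 ≤ besselZeroTerm k u :=
  div_nonneg (pow_nonneg hu k) (by positivity)

lemma besselOneTerm_nonneg (k : ℕ) {u : ℝ} (hu : 0 ≤ u) : 0 ≤ besselOneTerm k u :=
  div_nonneg (pow_nonneg hu k) (by positivity)

@[fun_prop]
lemma continuous_besselOneTerm (k : ℕ) : Continuous (besselOneTerm k) := by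
  unfold besselOneTerm; fun_prop

@[fun_prop]
lemma Continuous.besselOneProdCoeff {α : Type*} [TopologicalSpace α] {f g : α → ℝ}
    (hf : Continuous f) (hg : Continuous g) (n : ℕ) :
    Continuous fun x ↦ besselOneProdCoeff n (f x) (g x) := by
  unfold _root_.besselOneProdCoeff; fun_prop

lemma hasDerivAt_besselZeroTerm_succ (k : ℕ) (u : ℝ) :
    HasDerivAt (besselZeroTerm (k + 1)) (besselOneTerm k u) u := by
  unfold besselZeroTerm
  refine ((hasDerivAt_pow (k + 1) u).div_const _).congr_deriv ?_
  rw [besselOneTerm, Nat.add_sub_cancel, Nat.factorial_succ k]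
  push_cast
  field_simp

lemma norm_pow_div_factorial_mul_le (u : ℝ) (k m : ℕ) :
    ‖u ^ k / ((k.factorial : ℝ) * m.factorial)‖ ≤ |u| ^ k / k.factorial := by
  rw [norm_div, norm_pow, Real.norm_eq_abs, norm_of_nonneg (by positivity), ← div_div]
  exact div_le_self (by positivity) (by exact_mod_cast m.factorial_pos)

lemma summable_norm_besselZeroTerm (u : ℝ) : Summable fun k ↦ ‖besselZeroTerm k u‖ :=
  (Real.summable_pow_div_factorial |u|).of_nonneg_of_le (fun _ ↦ norm_nonneg _)
    fun k ↦ norm_pow_div_factorial_mul_le u k k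

lemma summable_norm_besselOneTerm (u : ℝ) : Summable fun k ↦ ‖besselOneTerm k u‖ :=
  (Real.summable_pow_div_factorial |u|).of_nonneg_of_le (fun _ ↦ norm_nonneg _)
    fun k ↦ norm_pow_div_factorial_mul_le u k (k + 1)

lemma besselZeroProdCoeff_mul (n : ℕ) (r a b : ℝ) :
    besselZeroProdCoeff n (r * a) (r * b) = r ^ n * besselZeroProdCoeff n a b := by
  rw [besselZeroProdCoeff, besselZeroProdCoeff, mul_sum]
  refine sum_congr rfl fun p hp ↦ ?_
  rw [besselZeroTerm_mul, besselZeroTerm_mul, ← mem_antidiagonal.mp hp, pow_add]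
  ring

lemma besselZeroProdCoeff_zero_right (n : ℕ) (a : ℝ) :
    besselZeroProdCoeff n a 0 = besselZeroTerm n a := by
  rw [besselZeroProdCoeff, sum_eq_single (n, 0)]
  · rw [besselZeroTerm_zero, mul_one]
  · rintro ⟨k, j⟩ hp hne
    have hj : j ≠ 0 := by rintro rfl; simp_all
    simp [besselZeroTerm, hj]
  · simp

lemma besselZeroProdCoeff_nonneg (n : ℕ) {a b : ℝ} (ha : 0 ≤ a) (hb : 0 ≤ b) :
    0 ≤ besselZeroProdCoeff n a b :=
  sum_nonneg fun _ _ ↦ mul_nonneg (besselZeroTerm_nonneg _ ha) (besselZeroTerm_nonneg _ hb)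

lemma besselOneProdCoeff_nonneg (n : ℕ) {a b : ℝ} (ha : 0 ≤ a) (hb : 0 ≤ b) :
    0 ≤ besselOneProdCoeff n a b :=
  sum_nonneg fun _ _ ↦ mul_nonneg (besselOneTerm_nonneg _ ha) (besselOneTerm_nonneg _ hb)

lemma hasDerivAt_besselZeroProdCoeff_succ (n : ℕ) (c s : ℝ) :
    HasDerivAt (fun t ↦ besselZeroProdCoeff (n + 1) (c + t) t)
      ((n + 2) * besselOneProdCoeff n (c + s) s) s := by
  have hφ (k : ℕ) (u : ℝ) : HasDerivAt (besselZeroTerm k) (deriv (besselZeroTerm k) u) u :=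
    (differentiableAt_id.pow k |>.div_const _).hasDerivAt
  have hsum := HasDerivAt.fun_sum (u := antidiagonal (n + 1)) fun p _ ↦
    ((hφ p.1 (c + s)).comp s ((hasDerivAt_id s).const_add c)).mul (hφ p.2 s)
  refine hsum.congr_deriv ?_
  have hderiv_zero : ∀ u, deriv (besselZeroTerm 0) u = 0 := by
    simp [show besselZeroTerm 0 = fun _ ↦ 1 from funext besselZeroTerm_zero]
  have hderiv_succ : ∀ k u, deriv (besselZeroTerm (k + 1)) u = besselOneTerm k u :=
    fun k u ↦ (hasDerivAt_besselZeroTerm_succ k u).deriv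
  rw [sum_add_distrib, Nat.sum_antidiagonal_succ, Nat.sum_antidiagonal_succ']
  simp only [Function.comp_apply, mul_one, hderiv_zero, hderiv_succ, zero_mul, mul_zero, zero_add]
  rw [besselOneProdCoeff, mul_sum, ← sum_add_distrib]
  refine sum_congr rfl fun p hp ↦ ?_
  rw [besselZeroTerm_eq_mul_besselOneTerm p.1, besselZeroTerm_eq_mul_besselOneTerm p.2,
    ← mem_antidiagonal.mp hp]
  push_cast
  ring

lemma besselZeroProdCoeff_succ_eq (n : ℕ) (c t : ℝ) :
    besselZeroProdCoeff (n + 1) (c + t) t =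
      (n + 2) * (besselOneTerm (n + 1) c + ∫ s in 0..t, besselOneProdCoeff n (c + s) s) := by
  have hFTC := intervalIntegral.integral_eq_sub_of_hasDerivAt
    (fun s _ ↦ hasDerivAt_besselZeroProdCoeff_succ n c s)
    ((by fun_prop : Continuous fun s ↦ (n + 2 : ℝ) * besselOneProdCoeff n (c + s) s)
      |>.intervalIntegrable 0 t)
  rw [intervalIntegral.integral_const_mul, add_zero, besselZeroProdCoeff_zero_right,
    besselZeroTerm_eq_mul_besselOneTerm] at hFTC
  push_cast at hFTC
  linear_combination -hFTC

lemma integral_comp_half_sq_sub_mul_self {g : ℝ → ℝ} (hg : Continuous g) (L : ℝ) :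
    ∫ K in 0..L, g ((L ^ 2 - K ^ 2) / 2) * K = ∫ s in 0..L ^ 2 / 2, g s := by
  have hsub := intervalIntegral.integral_comp_mul_deriv (a := 0) (b := L) (g := g)
    (f := fun K ↦ (L ^ 2 - K ^ 2) / 2) (f' := fun K ↦ -K)
    (fun K _ ↦ (((hasDerivAt_pow 2 K).const_sub (L ^ 2)).div_const 2).congr_deriv (by ring))
    continuous_neg.continuousOn hg
  simp only [Function.comp_apply, mul_neg, intervalIntegral.integral_neg, sub_self, zero_div,
    ne_eq, OfNat.ofNat_ne_zero, not_false_eq_true, zero_pow, sub_zero] at hsub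
  rw [intervalIntegral.integral_symm (L ^ 2 / 2) 0, ← hsub, neg_neg]

lemma hasSum_intervalIntegral_of_nonneg {f : ℕ → ℝ → ℝ} {a b : ℝ} (hab : a ≤ b)
    (hf : ∀ n, IntervalIntegrable (f n) volume a b) (hf₀ : ∀ n, ∀ t ∈ Set.Ioc a b, 0 ≤ f n t)
    (hs : Summable fun n ↦ ∫ t in a..b, f n t) :
    HasSum (fun n ↦ ∫ t in a..b, f n t) (∫ t in a..b, ∑' n, f n t) := by
  simp only [intervalIntegral.integral_of_le hab] at hs ⊢
  refine hasSum_integral_of_summable_integral_norm (fun n ↦ (hf n).1) (hs.congr fun n ↦ ?_)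
  exact setIntegral_congr_fun measurableSet_Ioc fun t ht ↦ (norm_of_nonneg (hf₀ n t ht)).symm

lemma hasSum_integral_tsum_mul_pow {c : ℕ → ℝ} {R : ℝ} (hR : 0 ≤ R) (hc : ∀ n, 0 ≤ c n)
    (hs : Summable fun n ↦ c n * R ^ n) :
    HasSum (fun n ↦ c n * (R ^ (n + 1) / (n + 1))) (∫ r in 0..R, ∑' n, c n * r ^ n) := by
  have hint (n : ℕ) : ∫ r in 0..R, c n * r ^ n = c n * (R ^ (n + 1) / (n + 1)) := by
    simp [integral_pow]
  simp only [← hint]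
  refine hasSum_intervalIntegral_of_nonneg hR
    (fun n ↦ (by fun_prop : Continuous _).intervalIntegrable _ _)
    (fun n t ht ↦ mul_nonneg (hc n) (pow_nonneg ht.1.le n)) ?_
  refine (hs.mul_left R).of_nonneg_of_le (fun n ↦ ?_) (fun n ↦ ?_) <;> rw [hint]
  · exact mul_nonneg (hc n) (by positivity)
  · calc c n * (R ^ (n + 1) / (n + 1)) ≤ c n * R ^ (n + 1) :=
          mul_le_mul_of_nonneg_left
            (div_le_self (by positivity) (le_add_of_nonneg_left n.cast_nonneg)) (hc n)
      _ = R * (c n * R ^ n) := by ring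

lemma besselI_zero_mul_sqrt (L : ℝ) {r : ℝ} (hr : 0 ≤ r) :
    besselI 0 (L * √(2 * r)) = ∑' k, besselZeroTerm k (r * (L ^ 2 / 2)) := by
  refine tsum_congr fun k ↦ ?_
  rw [besselZeroTerm, add_zero, add_zero, pow_mul, div_pow, mul_pow, sq_sqrt (by positivity)]
  ring_nf

lemma summable_besselZeroProdCoeff_mul_pow (a b r : ℝ) :
    Summable fun n ↦ besselZeroProdCoeff n a b * r ^ n := by
  refine (summable_norm_sum_mul_antidiagonal_of_summable_norm
    (summable_norm_besselZeroTerm (r * a)) (summable_norm_besselZeroTerm (r * b))).of_norm.congr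
    fun n ↦ ?_
  rw [← besselZeroProdCoeff, besselZeroProdCoeff_mul, mul_comm]

lemma besselI_zero_mul_besselI_zero (L₁ L₂ : ℝ) {r : ℝ} (hr : 0 ≤ r) :
    besselI 0 (L₁ * √(2 * r)) * besselI 0 (L₂ * √(2 * r)) =
      ∑' n, besselZeroProdCoeff n (L₁ ^ 2 / 2) (L₂ ^ 2 / 2) * r ^ n := by
  rw [besselI_zero_mul_sqrt _ hr, besselI_zero_mul_sqrt _ hr,
    tsum_mul_tsum_eq_tsum_sum_antidiagonal_of_summable_norm (summable_norm_besselZeroTerm _)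
      (summable_norm_besselZeroTerm _)]
  exact tsum_congr fun n ↦ by rw [← besselZeroProdCoeff, besselZeroProdCoeff_mul, mul_comm]

lemma hasSum_integral_besselI_zero_mul (L₁ L₂ : ℝ) {R : ℝ} (hR : 0 ≤ R) :
    HasSum (fun n ↦ besselZeroProdCoeff n (L₁ ^ 2 / 2) (L₂ ^ 2 / 2) * (R ^ (n + 1) / (n + 1)))
      (∫ r in 0..R, besselI 0 (L₁ * √(2 * r)) * besselI 0 (L₂ * √(2 * r))) := by
  rw [intervalIntegral.integral_congr fun r hr ↦
    besselI_zero_mul_besselI_zero L₁ L₂ (Set.uIcc_of_le hR ▸ hr).1]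
  exact hasSum_integral_tsum_mul_pow hR
    (fun n ↦ besselZeroProdCoeff_nonneg n (by positivity) (by positivity))
    (summable_besselZeroProdCoeff_mul_pow _ _ R)

lemma Hfun_eq_tsum (R a b : ℝ) :
    Hfun R a b = ∑' ℓ, R ^ (ℓ + 1) * besselOneTerm ℓ ((a ^ 2 - b ^ 2) / 2) := by
  refine tsum_congr fun ℓ ↦ ?_
  rw [besselOneTerm, div_pow]
  field_simp

lemma summable_norm_pow_succ_mul_besselOneTerm (R u : ℝ) :
    Summable fun ℓ ↦ ‖R ^ (ℓ + 1) * besselOneTerm ℓ u‖ :=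
  ((summable_norm_besselOneTerm (R * u)).mul_left ‖R‖).congr fun ℓ ↦ by
    rw [besselOneTerm_mul, ← norm_mul, pow_succ]
    ring_nf

lemma Hfun_mul_Hfun (R a b K : ℝ) :
    Hfun R a K * Hfun R b K =
      ∑' n, R ^ (n + 2) * besselOneProdCoeff n ((a ^ 2 - K ^ 2) / 2) ((b ^ 2 - K ^ 2) / 2) := by
  rw [Hfun_eq_tsum, Hfun_eq_tsum, tsum_mul_tsum_eq_tsum_sum_antidiagonal_of_summable_norm
    (summable_norm_pow_succ_mul_besselOneTerm _ _) (summable_norm_pow_succ_mul_besselOneTerm _ _)]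
  refine tsum_congr fun n ↦ ?_
  rw [besselOneProdCoeff, mul_sum]
  refine sum_congr rfl fun p hp ↦ ?_
  rw [← mem_antidiagonal.mp hp]
  ring

lemma hasSum_integral_Hfun_mul_Hfun_mul_self {R L₁ L₂ : ℝ} (hR : 0 ≤ R) (h12 : L₂ ≤ L₁)
    (hL₂ : 0 ≤ L₂) (hs : Summable fun n ↦ R ^ (n + 2) *
      ∫ s in 0..L₂ ^ 2 / 2, besselOneProdCoeff n ((L₁ ^ 2 - L₂ ^ 2) / 2 + s) s) :
    HasSum (fun n ↦ R ^ (n + 2) *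
      ∫ s in 0..L₂ ^ 2 / 2, besselOneProdCoeff n ((L₁ ^ 2 - L₂ ^ 2) / 2 + s) s)
      (∫ K in 0..L₂, Hfun R L₁ K * Hfun R L₂ K * K) := by
  have hterm (n : ℕ) : ∫ K in 0..L₂, R ^ (n + 2) *
      besselOneProdCoeff n ((L₁ ^ 2 - K ^ 2) / 2) ((L₂ ^ 2 - K ^ 2) / 2) * K =
      R ^ (n + 2) * ∫ s in 0..L₂ ^ 2 / 2, besselOneProdCoeff n ((L₁ ^ 2 - L₂ ^ 2) / 2 + s) s := by
    rw [← integral_comp_half_sq_sub_mul_self (by fun_prop), ← intervalIntegral.integral_const_mul]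
    refine intervalIntegral.integral_congr fun K _ ↦ ?_
    rw [show (L₁ ^ 2 - K ^ 2) / 2 = (L₁ ^ 2 - L₂ ^ 2) / 2 + (L₂ ^ 2 - K ^ 2) / 2 by ring]
    ring
  simp only [← hterm] at hs ⊢
  simp only [Hfun_mul_Hfun, ← tsum_mul_right]
  refine hasSum_intervalIntegral_of_nonneg hL₂
    (fun n ↦ (by fun_prop : Continuous _).intervalIntegrable _ _) (fun n K hK ↦ ?_) hs
  have hK₂ : K ^ 2 ≤ L₂ ^ 2 := pow_le_pow_left₀ hK.1.le hK.2 2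
  have hK₁ : K ^ 2 ≤ L₁ ^ 2 := hK₂.trans (pow_le_pow_left₀ hL₂ h12 2)
  exact mul_nonneg (mul_nonneg (by positivity)
    (besselOneProdCoeff_nonneg n (by linarith) (by linarith))) hK.1.le

theorem stmt4 (R : ℝ) (hR : 0 ≤ R) (L₁ L₂ : ℝ) (h12 : L₂ ≤ L₁) (h2 : 0 < L₂) :
    (∫ r in (0:ℝ)..R, besselI 0 (L₁ * Real.sqrt (2 * r)) * besselI 0 (L₂ * Real.sqrt (2 * r))) =
      Hfun R L₁ L₂ + ∫ K in (0:ℝ)..L₂, Hfun R L₁ K * Hfun R L₂ K * K := by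
  set c := (L₁ ^ 2 - L₂ ^ 2) / 2
  have hLHS := hasSum_integral_besselI_zero_mul L₁ L₂ hR
  rw [show L₁ ^ 2 / 2 = c + L₂ ^ 2 / 2 by ring] at hLHS
  have hH : HasSum (fun n ↦ R ^ (n + 1) * besselOneTerm n c) (Hfun R L₁ L₂) := by
    rw [Hfun_eq_tsum]
    exact (summable_norm_pow_succ_mul_besselOneTerm R c).of_norm.hasSum
  have hK : HasSum (fun n ↦ R ^ (n + 2) *
      ∫ s in 0..L₂ ^ 2 / 2, besselOneProdCoeff n (c + s) s)
      ((∫ r in 0..R, besselI 0 (L₁ * √(2 * r)) * besselI 0 (L₂ * √(2 * r))) - Hfun R L₁ L₂) := by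
    have h := (hasSum_nat_add_iff' 1).mpr (hLHS.sub hH)
    simp only [range_one, sum_singleton, besselZeroProdCoeff_zero, besselOneTerm_zero, zero_add,
      Nat.cast_zero, pow_one, div_one, one_mul, mul_one, sub_self, sub_zero] at h
    refine h.congr_fun fun n ↦ ?_
    rw [besselZeroProdCoeff_succ_eq]
    push_cast
    field_simp
    ring
  rw [(hasSum_integral_Hfun_mul_Hfun_mul_self hR h12 h2.le hK.summable).unique hK]
  ring
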